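/- Let μ be a finite measure and h : X → ℝ≥0 a bounded measurable function with ∫ h^p dμ > 0 for all p ≥ 0. Then the function f(p) = (∫ h^{p−1} dμ)/(∫ h^p dμ) is monotone decreasing on [1,∞). -/

import Mathlib

/-!
By Hölder's inequality `p ↦ log ∫ h ^ p` is convex on `[0, ∞)` (Lyapunov's inequality), and the
increments `g p - g (p - 1)` of a convex function `g` over steps of fixed length increase with `p`.
Here `g p - g (p - 1) = -log f(p)`.
-/

open MeasureTheory Set

theorem ConvexOn.monotoneOn_sub_comp_sub {s : Set ℝ} {f : ℝ → ℝ} (hf : ConvexOn ℝ s f)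
    {d : ℝ} (hd : 0 < d) : MonotoneOn (fun x => f x - f (x - d)) {x | x - d ∈ s ∧ x ∈ s} := by
  rintro x ⟨hxd, hx⟩ y ⟨hyd, hy⟩ hxy
  have hslope : ∀ z, slope f (z - d) z = (f z - f (z - d)) / d := fun z => by
    rw [slope_def_field, sub_sub_cancel]
  have hle : slope f (x - d) x ≤ slope f (y - d) y :=
    calc slope f (x - d) x
        ≤ slope f (x - d) y :=
          hf.slope_mono hxd ⟨hx, (show x - d < x by linarith).ne'⟩
            ⟨hy, (show x - d < y by linarith).ne'⟩ hxy
      _ = slope f y (x - d) := slope_comm f _ _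
      _ ≤ slope f y (y - d) :=
          hf.slope_mono hy ⟨hxd, (show x - d < y by linarith).ne⟩
            ⟨hyd, (show y - d < y by linarith).ne⟩ (by linarith)
      _ = slope f (y - d) y := slope_comm f _ _
  rw [hslope, hslope] at hle
  exact (div_le_div_iff_of_pos_right hd).1 hle

section

variable {X : Type*} [MeasurableSpace X] {μ : Measure X} {h : X → ℝ}

theorem memLp_rpow_mul_of_integrable_rpow (hnonneg : ∀ x, 0 ≤ h x) {a θ : ℝ} (hθ : 0 < θ)
    (hint : Integrable (fun x => h x ^ a) μ) :
    MemLp (fun x => h x ^ (θ * a)) (ENNReal.ofReal (1 / θ)) μ := by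
  have hmem := ((memLp_one_iff_integrable).2 hint).norm_rpow_div (ENNReal.ofReal θ)
  rw [one_div] at hmem
  rw [one_div, ENNReal.ofReal_inv_of_pos hθ]
  convert hmem using 2 with x
  rw [ENNReal.toReal_ofReal hθ.le, Real.norm_of_nonneg (Real.rpow_nonneg (hnonneg x) a),
    ← Real.rpow_mul (hnonneg x), mul_comm]

theorem integral_rpow_interpolate_le (hnonneg : ∀ x, 0 ≤ h x) {a b θ : ℝ} (ha : 0 ≤ a)
    (hb : 0 ≤ b) (hθ : 0 < θ) (hθ1 : θ < 1)
    (hinta : Integrable (fun x => h x ^ a) μ) (hintb : Integrable (fun x => h x ^ b) μ) :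
    ∫ x, h x ^ (θ * a + (1 - θ) * b) ∂μ ≤
      (∫ x, h x ^ a ∂μ) ^ θ * (∫ x, h x ^ b ∂μ) ^ (1 - θ) := by
  have hθ1' : 0 < 1 - θ := by linarith
  have hconj : (1 / θ).HolderConjugate (1 / (1 - θ)) := by
    rw [Real.holderConjugate_iff, lt_div_iff₀ hθ, one_div, one_div, inv_inv, inv_inv]
    constructor <;> linarith
  have hpow : ∀ c κ : ℝ, κ ≠ 0 → ∫ x, (h x ^ (κ * c)) ^ (1 / κ) ∂μ = ∫ x, h x ^ c ∂μ :=
    fun c κ hκ => integral_congr_ae <| .of_forall fun x => by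
      simp only [← Real.rpow_mul (hnonneg x)]
      congr 1
      field_simp
  have holder := integral_mul_le_Lp_mul_Lq_of_nonneg hconj
    (.of_forall fun x => Real.rpow_nonneg (hnonneg x) (θ * a))
    (.of_forall fun x => Real.rpow_nonneg (hnonneg x) ((1 - θ) * b))
    (memLp_rpow_mul_of_integrable_rpow hnonneg hθ hinta)
    (memLp_rpow_mul_of_integrable_rpow hnonneg hθ1' hintb)
  simp only [one_div_one_div, hpow a θ hθ.ne', hpow b (1 - θ) hθ1'.ne'] at holder
  calc ∫ x, h x ^ (θ * a + (1 - θ) * b) ∂μ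
      = ∫ x, h x ^ (θ * a) * h x ^ ((1 - θ) * b) ∂μ :=
        integral_congr_ae <| .of_forall fun x =>
          Real.rpow_add_of_nonneg (hnonneg x) (by positivity) (by positivity)
    _ ≤ _ := holder

theorem convexOn_log_integral_rpow (hnonneg : ∀ x, 0 ≤ h x)
    (hpos : ∀ p : ℝ, 0 ≤ p → 0 < ∫ x, h x ^ p ∂μ)
    (hint : ∀ p : ℝ, 0 ≤ p → Integrable (fun x => h x ^ p) μ) :
    ConvexOn ℝ (Ici (0 : ℝ)) (fun p => Real.log (∫ x, h x ^ p ∂μ)) := by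
  refine (convexOn_iff_forall_pos).2 ⟨convex_Ici 0, ?_⟩
  intro a (ha : 0 ≤ a) b (hb : 0 ≤ b) s t hs ht hst
  obtain rfl : t = 1 - s := by linarith
  have hA := hpos a ha
  have hB := hpos b hb
  calc Real.log (∫ x, h x ^ (s • a + (1 - s) • b) ∂μ)
      ≤ Real.log ((∫ x, h x ^ a ∂μ) ^ s * (∫ x, h x ^ b ∂μ) ^ (1 - s)) :=
        Real.log_le_log (hpos _ (by simp only [smul_eq_mul]; positivity))
          (integral_rpow_interpolate_le hnonneg ha hb hs (by linarith) (hint a ha) (hint b hb))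
    _ = s • Real.log (∫ x, h x ^ a ∂μ) + (1 - s) • Real.log (∫ x, h x ^ b ∂μ) := by
        rw [Real.log_mul (by positivity) (by positivity), Real.log_rpow hA, Real.log_rpow hB]
        rfl

end

theorem stmt_5_general {X : Type*} [MeasurableSpace X] (μ : Measure X)
    (h : X → ℝ) (hnonneg : ∀ x, 0 ≤ h x)
    (hpos : ∀ p : ℝ, 0 ≤ p → 0 < ∫ x, h x ^ p ∂μ)
    (hint : ∀ p : ℝ, 0 ≤ p → Integrable (fun x => h x ^ p) μ) :
    AntitoneOn (fun p : ℝ => (∫ x, h x ^ (p - 1) ∂μ) / (∫ x, h x ^ p ∂μ))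
      (Set.Ici 1) := by
  intro p (hp : 1 ≤ p) q (hq : 1 ≤ q) hpq
  have hdom : ∀ r : ℝ, 1 ≤ r → r ∈ {x | x - 1 ∈ Ici (0 : ℝ) ∧ x ∈ Ici 0} :=
    fun r hr => ⟨sub_nonneg.2 hr, zero_le_one.trans hr⟩
  have hincr := (convexOn_log_integral_rpow hnonneg hpos hint).monotoneOn_sub_comp_sub
    one_pos (hdom p hp) (hdom q hq) hpq
  have hlog : ∀ r : ℝ, 1 ≤ r →
      Real.log ((∫ x, h x ^ (r - 1) ∂μ) / ∫ x, h x ^ r ∂μ) =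
        -(Real.log (∫ x, h x ^ r ∂μ) - Real.log (∫ x, h x ^ (r - 1) ∂μ)) := fun r hr => by
    rw [Real.log_div (hpos _ (hdom r hr).1).ne' (hpos r (hdom r hr).2).ne', neg_sub]
  have hratio : ∀ r : ℝ, 1 ≤ r → 0 < (∫ x, h x ^ (r - 1) ∂μ) / ∫ x, h x ^ r ∂μ :=
    fun r hr => div_pos (hpos _ (hdom r hr).1) (hpos r (hdom r hr).2)
  rw [← Real.log_le_log_iff (hratio q hq) (hratio p hp), hlog q hq, hlog p hp]
  exact neg_le_neg hincr

/-- f(p) = (∫ h^{p−1})/(∫ h^p) is monotone decreasing on [1,∞). -/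
theorem stmt_5 {X : Type*} [MeasurableSpace X] (μ : Measure X) [IsFiniteMeasure μ]
    (h : X → ℝ) (hmeas : Measurable h) (hnonneg : ∀ x, 0 ≤ h x)
    (M : ℝ) (hbound : ∀ x, h x ≤ M)
    (hpos : ∀ p : ℝ, 0 ≤ p → 0 < ∫ x, h x ^ p ∂μ)
    (hint : ∀ p : ℝ, 0 ≤ p → Integrable (fun x => h x ^ p) μ) :
    AntitoneOn (fun p : ℝ => (∫ x, h x ^ (p - 1) ∂μ) / (∫ x, h x ^ p ∂μ))
      (Set.Ici 1) :=
  stmt_5_general μ h hnonneg hpos hint
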